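/- The coset spaces satisfy |Ω⁺| = q^m(q^m + 1)/2 and |Ω⁻| = q^m(q^m − 1)/2; that is, the index of O⁺ in G = Sp(V) is q^m(q^m+1)/2 and the index of O⁻ in G is q^m(q^m−1)/2. -/

import Mathlib

set_option synthInstance.maxHeartbeats 1000000
set_option maxHeartbeats 1000000

open scoped BigOperators

/-- The field with `2^f` elements (`q = 2^f`). -/
abbrev Fq (f : ℕ) : Type := GaloisField 2 f

/-- The natural `2m`-dimensional symplectic space over `Fq f`. -/
abbrev V (f m : ℕ) : Type := (Fin m → Fq f) × (Fin m → Fq f)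

/-- The standard nondegenerate alternating bilinear form
`B((x,y),(x',y')) = ∑ i, (x i * y' i + y i * x' i)`. -/
noncomputable def B {f m : ℕ} (u w : V f m) : Fq f :=
  ∑ i, (u.1 i * w.2 i + u.2 i * w.1 i)

/-- The symplectic group `Sp_{2m}(2^f)`: the invertible linear maps preserving `B`. -/
def Sp (f m : ℕ) : Subgroup ((V f m →ₗ[Fq f] V f m)ˣ) where
  carrier := {g | ∀ u w : V f m,
    B ((g : V f m →ₗ[Fq f] V f m) u) ((g : V f m →ₗ[Fq f] V f m) w) = B u w}
  one_mem' := by intro u w; simp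
  mul_mem' := by
    intro g h hg hh u w
    simp only [Units.val_mul, Module.End.mul_apply]
    rw [hg, hh]
  inv_mem' := by
    intro g hg u w
    have := hg (((g⁻¹ : _ˣ) : V f m →ₗ[Fq f] V f m) u)
      (((g⁻¹ : _ˣ) : V f m →ₗ[Fq f] V f m) w)
    simpa [← Module.End.mul_apply, ← Units.val_mul] using this.symm

/-- The natural action of the symplectic group on `V` by matrix multiplication. -/
noncomputable instance {f m : ℕ} : MulAction (Sp f m) (V f m) where
  smul g v := ((g : (V f m →ₗ[Fq f] V f m)ˣ) : V f m →ₗ[Fq f] V f m) v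
  one_smul v := by simp [HSMul.hSMul, SMul.smul]
  mul_smul g h v := by simp [HSMul.hSMul, SMul.smul, Units.val_mul]

/-- The quadratic form of plus type: `Q⁺(x,y) = ∑ i, x i * y i`. -/
noncomputable def Qplus {f m : ℕ} (v : V f m) : Fq f := ∑ i, v.1 i * v.2 i

/-- The quadratic form of minus type:
`Q⁻(x,y) = x 0 ^ 2 + a * y 0 ^ 2 + ∑ i, x i * y i`. -/
noncomputable def Qminus {f m : ℕ} (hm : 0 < m) (a : Fq f) (v : V f m) : Fq f :=
  v.1 ⟨0, hm⟩ ^ 2 + a * v.2 ⟨0, hm⟩ ^ 2 + ∑ i, v.1 i * v.2 i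

/-- The isometry group of a quadratic form `Q` on `V`, as a subgroup of `Sp`. -/
def Ogrp {f m : ℕ} (Q : V f m → Fq f) : Subgroup (Sp f m) where
  carrier := {g | ∀ v : V f m, Q (g • v) = Q v}
  one_mem' := by intro v; rw [one_smul]
  mul_mem' := by intro g h hg hh v; rw [mul_smul, hg, hh]
  inv_mem' := by
    intro g hg v
    conv_rhs => rw [← smul_inv_smul g v]
    rw [hg]

/-- The orthogonal group `O⁺ = O⁺_{2m}(2^f)` of the plus-type form, inside `Sp`. -/
noncomputable def Oplus (f m : ℕ) : Subgroup (Sp f m) := Ogrp Qplus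

/-- The orthogonal group `O⁻ = O⁻_{2m}(2^f)` of the minus-type form, inside `Sp`. -/
noncomputable def Ominus (f m : ℕ) (hm : 0 < m) (a : Fq f) : Subgroup (Sp f m) :=
  Ogrp (Qminus hm a)

/-!
In characteristic 2 the quadratic forms polarizing to `B` are the maps
`qform u = Q⁺ + B(u, ·)²`, `u ∈ V`, and `Sp` permutes them: for `g ∈ Sp` the map
`Q⁺ ∘ g + Q⁺` is additive and Frobenius-semilinear, hence the square of a linear form
`B(w, ·)`. A symplectic transvection carries `qform u'` to `qform u` as soon as
`Q⁺ u + Q⁺ u'` lies in the Artin–Schreier subgroup `{x² + x}`, which has index 2.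
Since `Q⁻ = qform u₀` with `Q⁺ u₀ = √a`, and `Q⁺`, `Q⁻` have different numbers of zeros,
the orbit of `Q⁺` is `{qform u | Q⁺ u ∈ {x² + x}}` and the orbit of `Q⁻` is the
complementary family. By orbit–stabilizer the two indices are the sizes of these two sets
of vectors, and counting solutions of `x ⬝ᵥ y ∈ S` gives `q^m (q^m ± 1) / 2`.
-/

open MulAction

attribute [local instance] arrowAction

section ArtinSchreier

variable {K : Type*} [Field K] [CharP K 2]

variable (K) in
def artinSchreier : K →+ K where
  toFun x := x ^ 2 + x
  map_zero' := by ring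
  map_add' x y := by rw [CharTwo.add_sq]; ring

theorem artinSchreier_apply (x : K) : artinSchreier K x = x ^ 2 + x := rfl

theorem artinSchreier_sq (x : K) : artinSchreier K (x ^ 2) = artinSchreier K x ^ 2 := by
  rw [artinSchreier_apply, artinSchreier_apply, CharTwo.add_sq, ← pow_mul]

theorem ker_artinSchreier : ((artinSchreier K).ker : Set K) = {0, 1} := by
  ext x
  simp [artinSchreier_apply, sq, ← mul_add_one, CharTwo.add_eq_zero]

theorem index_range_artinSchreier [Finite K] : (artinSchreier K).range.index = 2 := by
  have hker : Nat.card (artinSchreier K).ker = 2 := by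
    rw [← SetLike.coe_sort_coe, ker_artinSchreier, Nat.card_coe_set_eq,
      Set.ncard_pair zero_ne_one]
  have h := (artinSchreier K).ker.card_mul_index
  rw [AddSubgroup.index_ker, hker, ← (artinSchreier K).range.card_mul_index, mul_comm] at h
  exact (Nat.eq_of_mul_eq_mul_left Nat.card_pos h).symm

theorem card_range_artinSchreier_mul_two [Finite K] :
    Nat.card (artinSchreier K).range * 2 = Nat.card K := by
  simpa [index_range_artinSchreier] using (artinSchreier K).range.card_mul_index

theorem exists_sq_mul_add_eq_one {s : K} (hs : s ∈ (artinSchreier K).range) :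
    ∃ c : K, c ^ 2 * s + c = 1 := by
  obtain ⟨γ, rfl⟩ := hs
  rcases eq_or_ne (artinSchreier K γ) 0 with h0 | h0
  · exact ⟨1, by rw [h0]; ring⟩
  · refine ⟨γ / artinSchreier K γ, ?_⟩
    field_simp
    rw [artinSchreier_apply]
    ring

theorem sq_add_mul_sq_add_mul_eq_zero_iff {a : K} (ha : a ∉ (artinSchreier K).range) {x y : K} :
    x ^ 2 + a * y ^ 2 + x * y = 0 ↔ x = 0 ∧ y = 0 := by
  refine ⟨fun h => ?_, fun ⟨hx, hy⟩ => by simp [hx, hy]⟩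
  by_cases hy : y = 0
  · simpa [hy] using h
  · refine absurd ⟨x / y, ?_⟩ ha
    rw [artinSchreier_apply]
    field_simp
    linear_combination h - a * y ^ 2 * CharTwo.two_eq_zero (R := K)

end ArtinSchreier

section Counting

theorem Nat.card_subtype_prod {α β : Type*} [Fintype α] [Finite β] (p : α → β → Prop) :
    Nat.card {x : α × β // p x.1 x.2} = ∑ a, Nat.card {b // p a b} := by
  rw [Nat.card_congr (Equiv.subtypeProdEquivSigmaSubtype p), Nat.card_sigma]

theorem AddMonoidHom.card_preimage_mul_card {G H : Type*} [AddGroup G] [AddGroup H] [Finite G]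
    {φ : G →+ H} (hφ : Function.Surjective φ) (S : Set H) :
    Nat.card (φ ⁻¹' S) * Nat.card H = Nat.card S * Nat.card G := by
  choose σ hσ using hφ
  let e : φ ⁻¹' S ≃ S × φ.ker :=
    { toFun x := (⟨φ x, x.2⟩, ⟨-σ (φ x) + x, by simp [hσ]⟩)
      invFun p := ⟨σ p.1 + p.2, by simp [hσ, AddMonoidHom.mem_ker.mp p.2.2]⟩
      left_inv x := Subtype.ext (add_neg_cancel_left _ _)
      right_inv p := by ext <;> simp [hσ, AddMonoidHom.mem_ker.mp p.2.2] }
  have hrange : Nat.card φ.range = Nat.card H := by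
    rw [AddMonoidHom.range_eq_top.mpr fun y => ⟨σ y, hσ y⟩, AddSubgroup.card_top]
  rw [Nat.card_congr e, Nat.card_prod, mul_assoc, ← hrange, ← AddSubgroup.index_ker,
    AddSubgroup.card_mul_index]

theorem card_fiber_smul {G X Y : Type*} [Group G] [MulAction G X] (g : G) (F : X → Y) (y : Y) :
    Nat.card {x // (g • F) x = y} = Nat.card {x // F x = y} :=
  Nat.card_congr ((MulAction.toPerm g⁻¹).subtypeEquiv fun _ => Iff.rfl)

variable {K : Type*} [Field K] [Finite K]

theorem card_dotProduct_mem_of_ne_zero {n : ℕ} {x : Fin n → K} (hx : x ≠ 0) (S : Set K) :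
    Nat.card {y // x ⬝ᵥ y ∈ S} * Nat.card K = Nat.card S * Nat.card K ^ n := by
  have hφ : dotProductEquiv K (Fin n) x ≠ 0 := by simpa using hx
  have hcard : Nat.card (Fin n → K) = Nat.card K ^ n := by rw [Nat.card_fun, Nat.card_fin]
  rw [← hcard]
  exact (dotProductEquiv K (Fin n) x).toAddMonoidHom.card_preimage_mul_card
    (LinearMap.surjective hφ) S

open Classical in
theorem card_dotProduct_mem (n : ℕ) (S : Set K) :
    Nat.card {p : (Fin n → K) × (Fin n → K) // p.1 ⬝ᵥ p.2 ∈ S} * Nat.card K =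
      (if (0 : K) ∈ S then Nat.card K ^ n * Nat.card K else 0) +
        (Nat.card K ^ n - 1) * (Nat.card S * Nat.card K ^ n) := by
  have := Fintype.ofFinite K
  rw [Nat.card_subtype_prod (fun x y => x ⬝ᵥ y ∈ S), Finset.sum_mul,
    ← Finset.add_sum_erase _ _ (Finset.mem_univ 0),
    Finset.sum_congr rfl fun x hx => card_dotProduct_mem_of_ne_zero (Finset.ne_of_mem_erase hx) S]
  split_ifs with h0 <;> simp [h0, Finset.card_erase_of_mem]

end Counting

section SymplecticForm

variable {f m : ℕ}

theorem B_comm (u w : V f m) : B u w = B w u := by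
  simp only [B, mul_comm, add_comm]

theorem B_self (u : V f m) : B u u = 0 := by
  simp [B, mul_comm (u.2 _), CharTwo.add_self_eq_zero]

theorem B_add_left (u v w : V f m) : B (u + v) w = B u w + B v w := by
  simp only [B, ← Finset.sum_add_distrib, Prod.fst_add, Prod.snd_add, Pi.add_apply]
  exact Finset.sum_congr rfl fun _ _ => by ring

theorem B_smul_left (c : Fq f) (u w : V f m) : B (c • u) w = c * B u w := by
  simp only [B, Finset.mul_sum, Prod.smul_fst, Prod.smul_snd, Pi.smul_apply, smul_eq_mul]
  exact Finset.sum_congr rfl fun _ _ => by ring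

theorem B_add_right (u v w : V f m) : B u (v + w) = B u v + B u w := by
  rw [B_comm, B_add_left, B_comm v, B_comm w]

theorem B_smul_right (c : Fq f) (u w : V f m) : B u (c • w) = c * B u w := by
  rw [B_comm, B_smul_left, B_comm]

noncomputable def Bform : LinearMap.BilinForm (Fq f) (V f m) :=
  LinearMap.mk₂ (Fq f) B B_add_left B_smul_left B_add_right B_smul_right

theorem Bform_apply (u w : V f m) : Bform u w = B u w := rfl

theorem eq_zero_of_forall_B_eq_zero {u : V f m} (h : ∀ w, B u w = 0) : u = 0 := by
  ext j
  · simpa [B, Pi.single_apply] using h (0, Pi.single j 1)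
  · simpa [B, Pi.single_apply] using h (Pi.single j 1, 0)

theorem Bform_nondegenerate : (Bform (f := f) (m := m)).Nondegenerate :=
  ⟨fun _ h => eq_zero_of_forall_B_eq_zero h,
    fun w h => eq_zero_of_forall_B_eq_zero fun u => (B_comm w u).trans (h u)⟩

theorem exists_B_eq (ℓ : Module.Dual (Fq f) (V f m)) : ∃ w, ∀ v, ℓ v = B w v :=
  ⟨(Bform.toDual Bform_nondegenerate).symm ℓ, fun v => by
    rw [← Bform_apply, ← LinearMap.BilinForm.toDual_def Bform_nondegenerate,
      LinearEquiv.apply_symm_apply]⟩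

theorem exists_sq_B_eq {D : V f m →+ Fq f} (hD : ∀ (c : Fq f) v, D (c • v) = c ^ 2 * D v) :
    ∃ w, ∀ v, D v = B w v ^ 2 := by
  let ℓ : Module.Dual (Fq f) (V f m) :=
    { toFun v := (frobeniusEquiv (Fq f) 2).symm (D v)
      map_add' u v := by simp
      map_smul' c v := by simp [hD, frobeniusEquiv_symm_pow] }
  obtain ⟨w, hw⟩ := exists_B_eq ℓ
  exact ⟨w, fun v => by rw [← hw]; exact (frobeniusEquiv_symm_pow_p _ _ _).symm⟩

theorem Sp.smul_add (g : Sp f m) (u v : V f m) : g • (u + v) = g • u + g • v :=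
  map_add _ u v

theorem Sp.smul_smul_comm (g : Sp f m) (c : Fq f) (v : V f m) : g • (c • v) = c • g • v :=
  map_smul _ c v

theorem Sp.B_smul_smul (g : Sp f m) (u v : V f m) : B (g • u) (g • v) = B u v := g.2 u v

noncomputable def Sp.transvection (w : V f m) (c : Fq f) : Sp f m :=
  ⟨LinearMap.GeneralLinearGroup.ofLinearEquiv
      (LinearEquiv.transvection (f := c • Bform w) (v := w) (by simp [Bform_apply, B_self])),
    fun u v => by
      change B (u + (c * B w u) • w) (v + (c * B w v) • w) = B u v
      simp only [B_add_left, B_add_right, B_smul_left, B_smul_right, B_self, B_comm u w]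
      linear_combination c * B w u * B w v * CharTwo.two_eq_zero (R := Fq f)⟩

theorem Sp.transvection_smul (w : V f m) (c : Fq f) (v : V f m) :
    Sp.transvection w c • v = v + (c * B w v) • w := rfl

end SymplecticForm

section QuadraticForms

variable {f m : ℕ}

theorem Qplus_add (u w : V f m) : Qplus (u + w) = Qplus u + Qplus w + B u w := by
  simp only [Qplus, B, ← Finset.sum_add_distrib, Prod.fst_add, Prod.snd_add, Pi.add_apply]
  exact Finset.sum_congr rfl fun _ _ => by ring

theorem Qplus_smul (c : Fq f) (v : V f m) : Qplus (c • v) = c ^ 2 * Qplus v := by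
  simp only [Qplus, Finset.mul_sum, Prod.smul_fst, Prod.smul_snd, Pi.smul_apply, smul_eq_mul]
  exact Finset.sum_congr rfl fun _ _ => by ring

theorem Qplus_zero : Qplus (0 : V f m) = 0 := by
  simp [Qplus]

noncomputable def qform (u : V f m) (v : V f m) : Fq f := Qplus v + B u v ^ 2

theorem qform_zero : qform (0 : V f m) = Qplus := by
  ext v
  simp [qform, B]

theorem qform_injective : Function.Injective (qform (f := f) (m := m)) := by
  intro u u' h
  refine (Bform.toDual Bform_nondegenerate).injective (LinearMap.ext fun v => ?_)
  simpa [qform, LinearMap.BilinForm.toDual_def, Bform_apply, CharTwo.sq_inj] using congr_fun h v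

theorem exists_Qplus_smul_eq_qform (g : Sp f m) :
    ∃ w, ∀ v : V f m, Qplus (g • v) = qform w v := by
  let D : V f m →+ Fq f := AddMonoidHom.mk' (fun v => Qplus (g • v) + Qplus v) fun u v => by
    simp only [Sp.smul_add, Qplus_add, Sp.B_smul_smul]
    linear_combination B u v * CharTwo.two_eq_zero (R := Fq f)
  obtain ⟨w, hw⟩ := exists_sq_B_eq (D := D) fun c v => by
    simp only [D, AddMonoidHom.mk'_apply, Sp.smul_smul_comm, Qplus_smul]
    ring
  exact ⟨w, fun v => by rw [qform, add_comm]; exact CharTwo.add_eq_iff_eq_add.mp (hw v)⟩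

theorem qform_transvection_smul (u w : V f m) (c : Fq f) (v : V f m) :
    qform u (Sp.transvection w c • v) = qform u v + (c ^ 2 * qform u w + c) * B w v ^ 2 := by
  simp only [Sp.transvection_smul, qform, Qplus_add, Qplus_smul, B_add_right, B_smul_right,
    CharTwo.add_sq, B_comm v w]
  ring

end QuadraticForms

section Orbits

variable {f m : ℕ}

theorem Ogrp_eq_stabilizer (Q : V f m → Fq f) : Ogrp Q = stabilizer (Sp f m) Q := by
  ext g
  rw [← inv_mem_iff, mem_stabilizer_iff]
  exact funext_iff.symm

theorem card_quotient_Ogrp (Q : V f m → Fq f) :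
    Nat.card (Sp f m ⧸ Ogrp Q) = (orbit (Sp f m) Q).ncard := by
  rw [Ogrp_eq_stabilizer]
  exact index_stabilizer _ _

theorem exists_smul_qform_eq (g : Sp f m) (u : V f m) : ∃ u', g • qform u = qform u' := by
  obtain ⟨w, hw⟩ := exists_Qplus_smul_eq_qform g⁻¹
  refine ⟨w + g • u, funext fun v => ?_⟩
  have hB : B u (g⁻¹ • v) = B (g • u) v := by rw [← Sp.B_smul_smul g, smul_inv_smul]
  change qform u (g⁻¹ • v) = _
  rw [qform, hw, hB, qform, qform, B_add_left, CharTwo.add_sq, add_assoc]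

theorem qform_mem_orbit {u u' : V f m} (h : Qplus u + Qplus u' ∈ (artinSchreier (Fq f)).range) :
    qform u ∈ orbit (Sp f m) (qform u') := by
  have hs : qform u' (u + u') ∈ (artinSchreier (Fq f)).range := by
    have : qform u' (u + u') = (Qplus u + Qplus u') + artinSchreier (Fq f) (B u u') := by
      simp only [qform, Qplus_add, B_add_right, B_self, add_zero, B_comm u' u, artinSchreier_apply]
      ring
    exact this ▸ add_mem h ⟨_, rfl⟩
  obtain ⟨c, hc⟩ := exists_sq_mul_add_eq_one hs
  refine ⟨(Sp.transvection (u + u') c)⁻¹, funext fun v => ?_⟩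
  change qform u' ((Sp.transvection (u + u') c)⁻¹⁻¹ • v) = qform u v
  rw [inv_inv, qform_transvection_smul, hc, one_mul, qform, qform, B_add_left, CharTwo.add_sq]
  linear_combination B u' v ^ 2 * CharTwo.two_eq_zero (R := Fq f)

theorem orbit_qform_eq_image {u₁ u₂ : V f m}
    (h₁₂ : Qplus u₁ + Qplus u₂ ∉ (artinSchreier (Fq f)).range)
    (hu₂ : qform u₂ ∉ orbit (Sp f m) (qform u₁)) :
    orbit (Sp f m) (qform u₁) =
      qform '' {u | Qplus u + Qplus u₁ ∈ (artinSchreier (Fq f)).range} := by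
  refine Set.Subset.antisymm ?_ fun _ ⟨u, hu, hQ⟩ => hQ ▸ qform_mem_orbit hu
  rintro _ ⟨g, rfl⟩
  obtain ⟨u, hu⟩ := exists_smul_qform_eq g u₁
  refine ⟨u, by_contra fun h => hu₂ ?_, hu.symm⟩
  have h₂ : qform u ∈ orbit (Sp f m) (qform u₂) := by
    refine qform_mem_orbit ?_
    have := (AddSubgroup.add_mem_iff_of_index_two index_range_artinSchreier).2
      (iff_of_false h h₁₂)
    convert this using 1
    linear_combination -Qplus u₁ * CharTwo.two_eq_zero (R := Fq f)
  rw [← orbit_eq_iff.mpr (hu ▸ mem_orbit _ g : qform u ∈ _), orbit_eq_iff.mpr h₂]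
  exact mem_orbit_self _

end Orbits

section ZeroCounts

variable {f : ℕ}

open Classical in
theorem card_Qplus_eq (n : ℕ) (c : Fq f) :
    Nat.card {v : V f n // Qplus v = c} * Nat.card (Fq f) =
      (if c = 0 then Nat.card (Fq f) ^ n * Nat.card (Fq f) else 0) +
        (Nat.card (Fq f) ^ n - 1) * Nat.card (Fq f) ^ n := by
  have h := card_dotProduct_mem n {c}
  simp only [Set.mem_singleton_iff, eq_comm (a := (0 : Fq f)), Nat.card_unique, one_mul] at h
  exact h

theorem card_Qminus_eq_zero {k : ℕ} (hm : 0 < k + 1) {a : Fq f}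
    (ha : a ∉ (artinSchreier (Fq f)).range) :
    Nat.card {v : V f (k + 1) // Qminus hm a v = 0} * Nat.card (Fq f) =
      Nat.card (Fq f) ^ k * Nat.card (Fq f) +
        Nat.card (Fq f) ^ 2 * ((Nat.card (Fq f) ^ k - 1) * Nat.card (Fq f) ^ k) := by
  classical
  have := Fintype.ofFinite (Fq f)
  let s : Fq f × Fq f → Fq f := fun p => p.1 ^ 2 + a * p.2 ^ 2 + p.1 * p.2
  let e : V f (k + 1) ≃ (Fq f × Fq f) × V f k :=
    ((Fin.consEquiv _).symm.prodCongr (Fin.consEquiv _).symm).trans (.prodProdProdComm _ _ _ _)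
  have hsplit (v : V f (k + 1)) : Qminus hm a v = 0 ↔ Qplus (e v).2 = s (e v).1 := by
    have : Qminus hm a v = s (e v).1 + Qplus (e v).2 := by
      simp [Qminus, Qplus, Fin.sum_univ_succ, e, s, Fin.consEquiv, Fin.tail, add_assoc]
    rw [this, CharTwo.add_eq_zero, eq_comm]
  rw [Nat.card_congr (e.subtypeEquiv (q := fun p => Qplus p.2 = s p.1) hsplit),
    Nat.card_subtype_prod (fun p w => Qplus w = s p), Finset.sum_mul,
    Finset.sum_congr rfl fun p _ => card_Qplus_eq k (s p)]
  simp only [s, sq_add_mul_sq_add_mul_eq_zero_iff ha, Finset.sum_add_distrib,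
    Fintype.sum_prod_type, ite_and]
  simp [sq, mul_assoc]

theorem Qminus_not_mem_orbit_Qplus {m : ℕ} (hm : 0 < m) {a : Fq f}
    (ha : a ∉ (artinSchreier (Fq f)).range) : Qminus hm a ∉ orbit (Sp f m) Qplus := by
  obtain ⟨k, rfl⟩ : ∃ k, m = k + 1 := ⟨m - 1, by omega⟩
  rintro ⟨g, hg : g • Qplus = Qminus hm a⟩
  have hcount := card_Qplus_eq (f := f) (k + 1) 0
  rw [if_pos rfl, ← card_fiber_smul g, hg, card_Qminus_eq_zero hm ha,
    pow_succ (Nat.card (Fq f)) k] at hcount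
  have hq : 1 < Nat.card (Fq f) := Finite.one_lt_card
  have hP : 1 ≤ Nat.card (Fq f) ^ k := Nat.one_le_pow _ _ Nat.card_pos
  set q := Nat.card (Fq f)
  set P := q ^ k
  zify [hP, Nat.one_le_iff_ne_zero.mpr (by positivity : P * q ≠ 0)] at hcount
  have hzero : (q : ℤ) * P * (2 * q - 2) = 0 := by linear_combination -hcount
  have hq' : (1 : ℤ) < q := by exact_mod_cast hq
  have hP' : (1 : ℤ) ≤ P := by exact_mod_cast hP
  have hpos : (0 : ℤ) < q * P * (2 * q - 2) := by
    apply mul_pos (mul_pos _ _) _ <;> linarith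
  exact hpos.ne' hzero

end ZeroCounts

section Counts

variable {f : ℕ}

theorem two_mul_card_Qplus_mem (n : ℕ) :
    2 * Nat.card {u : V f n // Qplus u ∈ (artinSchreier (Fq f)).range} =
      Nat.card (Fq f) ^ n * (Nat.card (Fq f) ^ n + 1) := by
  have h : Nat.card {u : V f n // Qplus u ∈ (artinSchreier (Fq f)).range} * Nat.card (Fq f) =
      Nat.card (Fq f) ^ n * Nat.card (Fq f) + (Nat.card (Fq f) ^ n - 1) *
        (Nat.card (artinSchreier (Fq f)).range * Nat.card (Fq f) ^ n) := by
    have h := card_dotProduct_mem n ((artinSchreier (Fq f)).range : Set (Fq f))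
    simp only [SetLike.mem_coe, zero_mem, if_true, SetLike.coe_sort_coe] at h
    exact h
  have hAS := card_range_artinSchreier_mul_two (K := Fq f)
  have hP : 1 ≤ Nat.card (Fq f) ^ n := Nat.one_le_pow _ _ Nat.card_pos
  apply Nat.eq_of_mul_eq_mul_right (Nat.card_pos (α := Fq f))
  zify [hP] at h hAS ⊢
  linear_combination 2 * h + ((Nat.card (Fq f) : ℤ) ^ n - 1) * (Nat.card (Fq f) : ℤ) ^ n * hAS

theorem two_mul_card_Qplus_not_mem (n : ℕ) :
    2 * Nat.card {u : V f n // Qplus u ∉ (artinSchreier (Fq f)).range} =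
      Nat.card (Fq f) ^ n * (Nat.card (Fq f) ^ n - 1) := by
  classical
  have h := Nat.card_congr
    (Equiv.sumCompl fun u : V f n => Qplus u ∈ (artinSchreier (Fq f)).range)
  have hmem := two_mul_card_Qplus_mem (f := f) n
  rw [Nat.card_sum, Nat.card_prod, Nat.card_fun, Nat.card_fin] at h
  have hP : 1 ≤ Nat.card (Fq f) ^ n := Nat.one_le_pow _ _ Nat.card_pos
  zify [hP] at h hmem ⊢
  linear_combination 2 * h - hmem

end Counts

section MinusType

variable {f m : ℕ}

noncomputable def qminusVector (hm : 0 < m) (a : Fq f) : V f m :=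
  (Pi.single ⟨0, hm⟩ ((frobeniusEquiv (Fq f) 2).symm a), Pi.single ⟨0, hm⟩ 1)

theorem B_qminusVector (hm : 0 < m) (a : Fq f) (v : V f m) :
    B (qminusVector hm a) v =
      (frobeniusEquiv (Fq f) 2).symm a * v.2 ⟨0, hm⟩ + v.1 ⟨0, hm⟩ := by
  simp [B, qminusVector, Pi.single_apply, ite_mul, Finset.sum_add_distrib]

theorem Qplus_qminusVector (hm : 0 < m) (a : Fq f) :
    Qplus (qminusVector hm a) = (frobeniusEquiv (Fq f) 2).symm a := by
  simp [Qplus, qminusVector, Pi.single_apply]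

theorem Qminus_eq_qform (hm : 0 < m) (a : Fq f) : Qminus hm a = qform (qminusVector hm a) := by
  ext v
  rw [qform, B_qminusVector, CharTwo.add_sq, mul_pow, frobeniusEquiv_symm_pow_p, Qminus, Qplus]
  ring

theorem Qplus_qminusVector_not_mem (hm : 0 < m) {a : Fq f}
    (ha : a ∉ (artinSchreier (Fq f)).range) :
    Qplus (qminusVector hm a) ∉ (artinSchreier (Fq f)).range := by
  rintro ⟨β, hβ⟩
  rw [Qplus_qminusVector] at hβ
  exact ha ⟨β ^ 2, by rw [artinSchreier_sq, hβ, frobeniusEquiv_symm_pow_p]⟩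

end MinusType

/-- The indices of the orthogonal subgroups in `G = Sp_{2m}(2^f)`:
`|Ω⁺| = |G : O⁺| = q^m (q^m + 1)/2` and `|Ω⁻| = |G : O⁻| = q^m (q^m - 1)/2`, where `q = 2^f`. -/
theorem card_cosets_orthogonal (f m : ℕ) (hf : 1 ≤ f) (hm : 0 < m) (a : Fq f)
    (ha : ∀ α : Fq f, α ^ 2 + α ≠ a) :
    Nat.card (Sp f m ⧸ Oplus f m) = (2 ^ f) ^ m * ((2 ^ f) ^ m + 1) / 2 ∧
    Nat.card (Sp f m ⧸ Ominus f m hm a) = (2 ^ f) ^ m * ((2 ^ f) ^ m - 1) / 2 := by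
  have hq : Nat.card (Fq f) = 2 ^ f := GaloisField.card 2 f (by omega)
  have ha' : a ∉ (artinSchreier (Fq f)).range := fun ⟨α, hα⟩ => ha α hα
  have hu := Qplus_qminusVector_not_mem hm ha'
  have hdisj := Qminus_not_mem_orbit_Qplus hm ha'
  rw [Qminus_eq_qform, ← qform_zero] at hdisj
  have hplus := orbit_qform_eq_image (by rwa [Qplus_zero, zero_add]) hdisj
  have hminus := orbit_qform_eq_image (by rwa [Qplus_zero, add_zero]) (mt mem_orbit_symm.mp hdisj)
  have hcompl : {u : V f m | Qplus u + Qplus (qminusVector hm a) ∈ (artinSchreier (Fq f)).range} =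
      {u | Qplus u ∉ (artinSchreier (Fq f)).range} := by
    ext u
    simp [AddSubgroup.add_mem_iff_of_index_two index_range_artinSchreier, hu]
  rw [Oplus, Ominus, card_quotient_Ogrp, card_quotient_Ogrp, ← qform_zero, Qminus_eq_qform, hplus,
    hminus, Set.ncard_image_of_injective _ qform_injective,
    Set.ncard_image_of_injective _ qform_injective, hcompl, Qplus_zero, ← hq]
  simp only [add_zero, ← Nat.card_coe_set_eq]
  exact ⟨Nat.eq_div_of_mul_eq_right two_ne_zero (two_mul_card_Qplus_mem m),
    Nat.eq_div_of_mul_eq_right two_ne_zero (two_mul_card_Qplus_not_mem m)⟩
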